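/- arXiv:0811.1305 — 5 statements merged into one kernel-verified Lean document; each statement's English description precedes it below -/
import Mathlib

section
/- Let a, b, k be natural numbers with 1 ≤ a ≤ b, and let c be a real number with c > 1 and c^(-a) + c^(-b) < 1. Suppose T : ℕ → ℝ satisfies: T(n) ≥ 0 for all n; T(n) ≤ (n+2)^k for all n < b; and T(n) ≤ T(n−a) + T(n−b) + n^k for all n ≥ b. Then there exists a constant C > 0 such that T(n) ≤ C · c^n for all n. -/
lemma poly_le_geom (k : ℕ) (c : ℝ) (hc : 1 < c) :
    ∃ M : ℝ, 1 ≤ M ∧ ∀ n : ℕ, ((n : ℝ) + 2) ^ k ≤ M * c ^ n := by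
  have hc0 : (0:ℝ) < c := lt_trans one_pos hc
  have hr : ‖c⁻¹‖ < 1 := by
    rw [Real.norm_eq_abs, abs_of_pos (inv_pos.mpr hc0)]
    exact inv_lt_one_of_one_lt₀ hc
  have hg : Filter.Tendsto (fun n : ℕ => (n : ℝ) ^ k * c⁻¹ ^ n) Filter.atTop (nhds 0) := by
    have hs := summable_norm_pow_mul_geometric_of_norm_lt_one (R := ℝ) k hr
    exact tendsto_zero_iff_norm_tendsto_zero.mpr hs.tendsto_atTop_zero
  set f : ℕ → ℝ := fun n => ((n : ℝ) + 2) ^ k * c⁻¹ ^ n with hf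
  have hfg : Filter.Tendsto f Filter.atTop (nhds 0) := by
    have h2 : Filter.Tendsto (fun n : ℕ => ((n + 2 : ℕ) : ℝ) ^ k * c⁻¹ ^ (n + 2)) Filter.atTop (nhds 0) :=
      hg.comp (Filter.tendsto_add_atTop_nat 2)
    have := h2.mul_const (c ^ 2)
    rw [zero_mul] at this
    apply this.congr
    intro n
    simp only [hf]
    push_cast
    rw [pow_add, mul_assoc, mul_assoc, inv_pow, inv_pow]
    rw [inv_mul_cancel₀ (by positivity : (c:ℝ)^2 ≠ 0), mul_one]
  have hev : ∀ᶠ n in Filter.atTop, f n < 1 := hfg.eventually_lt_const one_pos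
  obtain ⟨N, hN⟩ := Filter.eventually_atTop.mp hev
  have hfnn : ∀ n, 0 ≤ f n := fun n => by positivity
  refine ⟨1 + ∑ i ∈ Finset.range N, f i, le_add_of_nonneg_right (Finset.sum_nonneg fun i _ => hfnn i), fun n => ?_⟩
  have key : f n ≤ 1 + ∑ i ∈ Finset.range N, f i := by
    rcases le_or_gt N n with h | h
    · exact le_add_of_le_of_nonneg (le_of_lt (hN n h)) (Finset.sum_nonneg fun i _ => hfnn i)
    · exact le_add_of_nonneg_of_le one_pos.le
        (Finset.single_le_sum (fun i _ => hfnn i) (Finset.mem_range.mpr h))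
  have := mul_le_mul_of_nonneg_right key (pow_nonneg hc0.le n)
  calc ((n : ℝ) + 2) ^ k = f n * c ^ n := by
        simp only [hf]; rw [mul_assoc, inv_pow, inv_mul_cancel₀ (by positivity : (c:ℝ)^n ≠ 0), mul_one]
    _ ≤ _ := this

theorem backtracking_recurrence_bound
    (a b k : ℕ) (c : ℝ)
    (ha : 1 ≤ a) (hab : a ≤ b)
    (hc : 1 < c) (hroot : (c ^ a)⁻¹ + (c ^ b)⁻¹ < 1)
    (T : ℕ → ℝ)
    (hnonneg : ∀ n, 0 ≤ T n)
    (hbase : ∀ n < b, T n ≤ ((n : ℝ) + 2) ^ k)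
    (hrec : ∀ n, b ≤ n → T n ≤ T (n - a) + T (n - b) + (n : ℝ) ^ k) :
    ∃ C : ℝ, 0 < C ∧ ∀ n, T n ≤ C * c ^ n := by
  have hc0 : (0:ℝ) < c := lt_trans one_pos hc
  obtain ⟨M, hM1, hM⟩ := poly_le_geom k c hc
  obtain ⟨ε, hε⟩ : ∃ ε : ℝ, ε = 1 - (c ^ a)⁻¹ - (c ^ b)⁻¹ := ⟨_, rfl⟩
  have hε0 : 0 < ε := by rw [hε]; linarith
  have hε1 : ε ≤ 1 := by
    have : 0 < (c ^ a)⁻¹ := by positivity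
    have : 0 < (c ^ b)⁻¹ := by positivity
    rw [hε]; linarith
  refine ⟨M / ε, div_pos (lt_of_lt_of_le one_pos hM1) hε0, fun n => ?_⟩
  have hMC : M ≤ M / ε := by
    rw [le_div_iff₀ hε0]
    nlinarith
  induction n using Nat.strong_induction_on with
  | _ n ih =>
    rcases lt_or_ge n b with h | h
    · calc T n ≤ ((n : ℝ) + 2) ^ k := hbase n h
        _ ≤ M * c ^ n := hM n
        _ ≤ M / ε * c ^ n := mul_le_mul_of_nonneg_right hMC (pow_nonneg hc0.le n)
    · have ha' : a ≤ n := le_trans hab h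
      have hna : n - a < n := Nat.sub_lt (lt_of_lt_of_le (lt_of_lt_of_le one_pos ha) ha') ha
      have hnb : n - b < n := Nat.sub_lt (lt_of_lt_of_le (lt_of_lt_of_le one_pos (le_trans ha hab)) h) (le_trans ha hab)
      have h1 := ih _ hna
      have h2 := ih _ hnb
      have hpa : c ^ (n - a) = c ^ n * (c ^ a)⁻¹ := by
        rw [pow_sub₀ c (ne_of_gt hc0) ha']
      have hpb : c ^ (n - b) = c ^ n * (c ^ b)⁻¹ := by
        rw [pow_sub₀ c (ne_of_gt hc0) h]
      have hnk : (n : ℝ) ^ k ≤ M * c ^ n := by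
        calc (n : ℝ) ^ k ≤ ((n : ℝ) + 2) ^ k :=
              pow_le_pow_left₀ (Nat.cast_nonneg n) (by linarith) k
          _ ≤ M * c ^ n := hM n
      have hMeq : (M / ε) * ε = M := div_mul_cancel₀ M (ne_of_gt hε0)
      calc T n ≤ T (n - a) + T (n - b) + (n : ℝ) ^ k := hrec n h
        _ ≤ M / ε * c ^ (n - a) + M / ε * c ^ (n - b) + M * c ^ n := by linarith
        _ = M / ε * c ^ n := by
            rw [hpa, hpb]
            linear_combination (M / ε) * c ^ n * hε - c ^ n * hMeq
end

section
/- Let k be a natural number and let T : ℕ → ℝ satisfy: T(n) ≥ 0 for all n; T(n) ≤ (n+2)^k for all n < 4; and T(n) ≤ T(n−1) + T(n−4) + n^k for all n ≥ 4. Then there exists a constant C > 0 such that T(n) ≤ C · (1.39)^n for all n. -/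
open Filter Asymptotics

theorem vertex_cover_node_recurrence_bound
    (k : ℕ) (T : ℕ → ℝ)
    (hnonneg : ∀ n, 0 ≤ T n)
    (hbase : ∀ n < 4, T n ≤ ((n : ℝ) + 2) ^ k)
    (hrec : ∀ n, 4 ≤ n → T n ≤ T (n - 1) + T (n - 4) + (n : ℝ) ^ k) :
    ∃ C : ℝ, 0 < C ∧ ∀ n, T n ≤ C * (1.39 : ℝ) ^ n := by
  have hr1 : (1:ℝ) < 1.39 := by norm_num
  have hrpos : (0:ℝ) < 1.39 := by norm_num
  -- Step 1: bound n^k ≤ M * 1.39^n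
  obtain ⟨M, hM1, hM⟩ : ∃ M : ℝ, 1 ≤ M ∧ ∀ n : ℕ, (n:ℝ)^k ≤ M * 1.39 ^ n := by
    have h := isLittleO_pow_const_const_pow_of_one_lt (R := ℝ) k hr1
    rw [isLittleO_iff] at h
    obtain ⟨N, hN⟩ := Filter.eventually_atTop.mp (h (by norm_num : (0:ℝ) < 1))
    refine ⟨1 + ∑ i ∈ Finset.range N, (i:ℝ)^k, ?_, fun n => ?_⟩
    · have : (0:ℝ) ≤ ∑ i ∈ Finset.range N, (i:ℝ)^k :=
        Finset.sum_nonneg fun i _ => by positivity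
      linarith
    have hpow1 : (1:ℝ) ≤ 1.39 ^ n := one_le_pow₀ (le_of_lt hr1)
    by_cases hn : N ≤ n
    · have := hN n hn
      rw [Real.norm_eq_abs, Real.norm_eq_abs, abs_of_nonneg (by positivity),
        abs_of_nonneg (by positivity), one_mul] at this
      calc (n:ℝ)^k ≤ 1.39 ^ n := this
        _ = 1 * 1.39 ^ n := (one_mul _).symm
        _ ≤ _ := by
            apply mul_le_mul_of_nonneg_right _ (by positivity)
            have : (0:ℝ) ≤ ∑ i ∈ Finset.range N, (i:ℝ)^k :=
              Finset.sum_nonneg fun i _ => by positivity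
            linarith
    · push_neg at hn
      have hmem : n ∈ Finset.range N := Finset.mem_range.mpr hn
      have hle : (n:ℝ)^k ≤ ∑ i ∈ Finset.range N, (i:ℝ)^k :=
        Finset.single_le_sum (f := fun i : ℕ => (i:ℝ)^k) (fun i _ => by positivity) hmem
      calc (n:ℝ)^k ≤ 1 + ∑ i ∈ Finset.range N, (i:ℝ)^k := by linarith
        _ = (1 + ∑ i ∈ Finset.range N, (i:ℝ)^k) * 1 := (mul_one _).symm
        _ ≤ _ := by
            apply mul_le_mul_of_nonneg_left hpow1
            have : (0:ℝ) ≤ ∑ i ∈ Finset.range N, (i:ℝ)^k :=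
              Finset.sum_nonneg fun i _ => by positivity
            linarith
  set δ : ℝ := 1.39^4 - 1.39^3 - 1 with hδdef
  have hδ : (0:ℝ) < δ := by norm_num [hδdef]
  set C : ℝ := (5:ℝ)^k + M * 1.39^4 / δ with hCdef
  have hC5 : (5:ℝ)^k ≤ C := by
    have : 0 < M * 1.39^4 / δ := by positivity
    simp only [hCdef]; linarith
  have hCM : M * 1.39^4 ≤ C * δ := by
    have h1 : M * 1.39^4 / δ ≤ C := by
      have : (0:ℝ) ≤ (5:ℝ)^k := by positivity
      simp only [hCdef]; linarith
    calc M * 1.39^4 = (M * 1.39^4 / δ) * δ := by field_simp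
      _ ≤ C * δ := mul_le_mul_of_nonneg_right h1 (le_of_lt hδ)
  have hCpos : 0 < C := lt_of_lt_of_le (by positivity) hC5
  refine ⟨C, hCpos, ?_⟩
  intro n
  induction n using Nat.strong_induction_on with
  | _ n ih =>
    by_cases h4 : n < 4
    · have hb := hbase n h4
      have h5 : ((n:ℝ) + 2)^k ≤ (5:ℝ)^k := by
        apply pow_le_pow_left₀ (by positivity)
        have : (n:ℝ) ≤ 3 := by exact_mod_cast Nat.lt_succ_iff.mp h4
        linarith
      have hpow1 : (1:ℝ) ≤ 1.39 ^ n := one_le_pow₀ (le_of_lt hr1)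
      calc T n ≤ (5:ℝ)^k := le_trans hb h5
        _ ≤ C := hC5
        _ = C * 1 := (mul_one _).symm
        _ ≤ C * 1.39 ^ n := mul_le_mul_of_nonneg_left hpow1 (le_of_lt hCpos)
    · push_neg at h4
      obtain ⟨m, rfl⟩ : ∃ m, n = m + 4 := ⟨n - 4, by omega⟩
      have h1 : T (m + 4 - 1) ≤ C * 1.39 ^ (m + 3) := by
        have := ih (m + 3) (by omega)
        simpa using this
      have h2 : T (m + 4 - 4) ≤ C * 1.39 ^ m := by
        have := ih m (by omega)
        simpa using this
      have h3 : ((m + 4 : ℕ):ℝ)^k ≤ C * δ * 1.39 ^ m := by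
        calc ((m + 4 : ℕ):ℝ)^k ≤ M * 1.39 ^ (m + 4) := hM (m + 4)
          _ = M * 1.39^4 * 1.39 ^ m := by rw [pow_add]; ring
          _ ≤ C * δ * 1.39 ^ m :=
              mul_le_mul_of_nonneg_right hCM (by positivity)
      have hT := hrec (m + 4) (by omega)
      have hfinal : C * 1.39 ^ (m + 3) + C * 1.39 ^ m + C * δ * 1.39 ^ m
          = C * 1.39 ^ (m + 4) := by
        simp only [hδdef, pow_add]; ring
      calc T (m + 4) ≤ T (m + 4 - 1) + T (m + 4 - 4) + ((m + 4 : ℕ):ℝ)^k := hT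
        _ ≤ C * 1.39 ^ (m + 3) + C * 1.39 ^ m + C * δ * 1.39 ^ m := by
            gcongr
        _ = C * 1.39 ^ (m + 4) := hfinal
end

section
/- Let k be a natural number and let T : ℕ → ℝ satisfy: T(m) ≥ 0 for all m; T(m) ≤ (m+2)^k for all m < 5; and T(m) ≤ T(m−3) + T(m−5) + m^k for all m ≥ 5. Then there exists a constant C > 0 such that T(m) ≤ C · (1.2)^m for all m. -/
/-!
Every polynomial is dominated by `C · 1.2 ^ m`, and `1.2` lies above the root of `x⁵ = x² + 1`,
i.e. `1.2⁻³ + 1.2⁻⁵ < 1`. The slack `δ = 1 - 1.2⁻³ - 1.2⁻⁵` absorbs the additive term: if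
`T m' ≤ C · 1.2 ^ m'` for `m' < m` and `m ^ k ≤ B · 1.2 ^ m` with `B ≤ C δ`, the recurrence gives
`T m ≤ C (1.2⁻³ + 1.2⁻⁵) 1.2 ^ m + C δ 1.2 ^ m = C · 1.2 ^ m`.
-/

theorem exists_pow_le_mul_pow (k : ℕ) {r : ℝ} (hr : 1 < r) :
    ∃ B : ℝ, ∀ n : ℕ, (n : ℝ) ^ k ≤ B * r ^ n := by
  obtain ⟨B, hB⟩ := (tendsto_pow_const_div_const_pow_of_one_lt k hr).bddAbove_range
  refine ⟨B, fun n => ?_⟩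
  rw [← div_le_iff₀ (by positivity)]
  exact hB ⟨n, rfl⟩

theorem exists_le_mul_pow_of_le_add_add {T : ℕ → ℝ} {a b n₀ : ℕ} {c A B : ℝ}
    (hc : 1 ≤ c) (han : a ≤ n₀) (hbn : b ≤ n₀) (hcab : c⁻¹ ^ a + c⁻¹ ^ b < 1)
    (hbase : ∀ m < n₀, T m ≤ A)
    (hrec : ∀ m, n₀ ≤ m → T m ≤ T (m - a) + T (m - b) + B * c ^ m) :
    ∃ C : ℝ, 0 < C ∧ ∀ m, T m ≤ C * c ^ m := by
  have hc₀ : 0 < c := by linarith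
  have hpos : ∀ d : ℕ, 0 < c⁻¹ ^ d := fun d => by positivity
  have ha : a ≠ 0 := by rintro rfl; linarith [hpos b, pow_zero c⁻¹]
  have hb : b ≠ 0 := by rintro rfl; linarith [hpos a, pow_zero c⁻¹]
  set δ := 1 - c⁻¹ ^ a - c⁻¹ ^ b
  have hδ : 0 < δ := by simp only [δ]; linarith
  set C := max 1 (max A (B / δ))
  have hAC : A ≤ C := le_max_of_le_right (le_max_left _ _)
  have hBC : B ≤ C * δ := (div_le_iff₀ hδ).1 (le_max_of_le_right (le_max_right _ _))
  have hpow_sub : ∀ {d m : ℕ}, d ≤ m → c ^ (m - d) = c⁻¹ ^ d * c ^ m := fun h => by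
    rw [pow_sub₀ c hc₀.ne' h, inv_pow, mul_comm]
  refine ⟨C, lt_of_lt_of_le one_pos (le_max_left _ _), fun m => ?_⟩
  induction m using Nat.strong_induction_on with
  | _ m ih =>
    rcases lt_or_ge m n₀ with hm | hm
    · calc T m ≤ C := (hbase m hm).trans hAC
        _ ≤ C * c ^ m := le_mul_of_one_le_right (by positivity) (one_le_pow₀ hc)
    · have hTa := ih (m - a) (by omega)
      have hTb := ih (m - b) (by omega)
      rw [hpow_sub (han.trans hm)] at hTa
      rw [hpow_sub (hbn.trans hm)] at hTb
      calc T m ≤ C * (c⁻¹ ^ a * c ^ m) + C * (c⁻¹ ^ b * c ^ m) + C * δ * c ^ m :=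
            (hrec m hm).trans (by gcongr)
        _ = C * c ^ m := by simp only [δ]; ring

theorem vertex_cover_edge_recurrence_bound_general
    (k : ℕ) (T : ℕ → ℝ)
    (hbase : ∀ m < 5, T m ≤ ((m : ℝ) + 2) ^ k)
    (hrec : ∀ m, 5 ≤ m → T m ≤ T (m - 3) + T (m - 5) + (m : ℝ) ^ k) :
    ∃ C : ℝ, 0 < C ∧ ∀ m, T m ≤ C * (1.2 : ℝ) ^ m := by
  obtain ⟨B, hB⟩ := exists_pow_le_mul_pow k (r := 1.2) (by norm_num)
  have hbase' : ∀ m < 5, T m ≤ 6 ^ k := fun m hm => by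
    refine (hbase m hm).trans (pow_le_pow_left₀ (by positivity) ?_ k)
    have : (m : ℝ) ≤ 4 := by exact_mod_cast Nat.le_of_lt_succ hm
    linarith
  exact exists_le_mul_pow_of_le_add_add (a := 3) (B := B) (by norm_num) (by norm_num) le_rfl
    (by norm_num) hbase' fun m hm => (hrec m hm).trans (by linarith [hB m])

theorem vertex_cover_edge_recurrence_bound
    (k : ℕ) (T : ℕ → ℝ)
    (hnonneg : ∀ m, 0 ≤ T m)
    (hbase : ∀ m < 5, T m ≤ ((m : ℝ) + 2) ^ k)
    (hrec : ∀ m, 5 ≤ m → T m ≤ T (m - 3) + T (m - 5) + (m : ℝ) ^ k) :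
    ∃ C : ℝ, 0 < C ∧ ∀ m, T m ≤ C * (1.2 : ℝ) ^ m :=
  vertex_cover_edge_recurrence_bound_general k T hbase hrec
end

section
/- Let k be a natural number and let T : ℕ → ℕ → ℝ satisfy: T(m,n) ≥ 0 for all m, n; T(m,n) ≤ (m+n+2)^k whenever m < 5 or n < 4; and T(m,n) ≤ T(m−3, n−1) + T(m−5, n−4) + (m+n)^k whenever m ≥ 5 and n ≥ 4. Then there exists a constant C > 0 such that T(m,n) ≤ C · (1.21)^(m/2 + n) for all m, n, where the exponent m/2 + n is a real number. -/
open Filter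

theorem vertex_cover_double_recurrence_bound
    (k : ℕ) (T : ℕ → ℕ → ℝ)
    (hnonneg : ∀ m n, 0 ≤ T m n)
    (hbase : ∀ m n, (m < 5 ∨ n < 4) → T m n ≤ ((m : ℝ) + n + 2) ^ k)
    (hrec : ∀ m n, 5 ≤ m → 4 ≤ n →
      T m n ≤ T (m - 3) (n - 1) + T (m - 5) (n - 4) + ((m : ℝ) + n) ^ k) :
    ∃ C : ℝ, 0 < C ∧ ∀ m n, T m n ≤ C * (1.21 : ℝ) ^ ((m : ℝ) / 2 + (n : ℝ)) := by
  -- polynomial dominated by 1.1^x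
  obtain ⟨D, hD1, hD⟩ : ∃ D : ℝ, 1 ≤ D ∧ ∀ x : ℕ, ((x : ℝ) + 2) ^ k ≤ D * (1.1 : ℝ) ^ x := by
    have h1 : Tendsto (fun n : ℕ => (n : ℝ) ^ k / (1.1 : ℝ) ^ n) atTop (nhds 0) :=
      tendsto_pow_const_div_const_pow_of_one_lt k (by norm_num)
    have h2 : Tendsto (fun x : ℕ => ((x : ℝ) + 2) ^ k / (1.1 : ℝ) ^ (x + 2)) atTop (nhds 0) := by
      have h := h1.comp (tendsto_add_atTop_nat 2)
      refine h.congr fun x => ?_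
      simp only [Function.comp]
      push_cast
      ring
    have h3 : Tendsto (fun x : ℕ => ((x : ℝ) + 2) ^ k / (1.1 : ℝ) ^ x) atTop (nhds 0) := by
      have heq : (fun x : ℕ => ((x : ℝ) + 2) ^ k / (1.1 : ℝ) ^ x)
          = fun x : ℕ => (((x : ℝ) + 2) ^ k / (1.1 : ℝ) ^ (x + 2)) * (1.1 : ℝ) ^ 2 := by
        funext x
        have hp : (0 : ℝ) < (1.1 : ℝ) ^ x := by positivity
        field_simp [pow_add]
        ring
      rw [heq]
      simpa using h2.mul_const ((1.1 : ℝ) ^ 2)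
    obtain ⟨D0, hD0⟩ := h3.bddAbove_range
    refine ⟨max D0 1, le_max_right _ _, fun x => ?_⟩
    have hx : ((x : ℝ) + 2) ^ k / (1.1 : ℝ) ^ x ≤ max D0 1 :=
      le_trans (hD0 (Set.mem_range_self x)) (le_max_left _ _)
    have hp : (0 : ℝ) < (1.1 : ℝ) ^ x := by positivity
    calc ((x : ℝ) + 2) ^ k = (((x : ℝ) + 2) ^ k / (1.1 : ℝ) ^ x) * (1.1 : ℝ) ^ x := by
          field_simp
      _ ≤ max D0 1 * (1.1 : ℝ) ^ x := mul_le_mul_of_nonneg_right hx hp.le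
  set ε : ℝ := 1 - 1 / (1.1 : ℝ) ^ 5 - 1 / (1.1 : ℝ) ^ 13 with hε_def
  have hε : 0 < ε := by norm_num [hε_def]
  have hε1 : ε ≤ 1 := by norm_num [hε_def]
  set C : ℝ := D / ε with hC_def
  have hC : 0 < C := div_pos (lt_of_lt_of_le one_pos hD1) hε
  have hDC : D = ε * C := by
    rw [hC_def]; field_simp
  have hDleC : D ≤ C := by
    rw [hC_def, le_div_iff₀ hε]
    nlinarith [lt_of_lt_of_le one_pos hD1]
  -- base-case style bound
  have hbase' : ∀ m n : ℕ, ((m : ℝ) + n + 2) ^ k ≤ C * (1.1 : ℝ) ^ (m + 2 * n) := by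
    intro m n
    have h1 := hD (m + n)
    have h2 : ((m : ℝ) + n + 2) ^ k ≤ D * (1.1 : ℝ) ^ (m + n) := by
      have : (((m + n : ℕ) : ℝ) + 2) = (m : ℝ) + n + 2 := by push_cast; ring
      rwa [this] at h1
    have h3 : (1.1 : ℝ) ^ (m + n) ≤ (1.1 : ℝ) ^ (m + 2 * n) :=
      pow_le_pow_right₀ (by norm_num) (by omega)
    have hpn : (0 : ℝ) ≤ (1.1 : ℝ) ^ (m + n) := by positivity
    calc ((m : ℝ) + n + 2) ^ k ≤ D * (1.1 : ℝ) ^ (m + n) := h2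
      _ ≤ C * (1.1 : ℝ) ^ (m + 2 * n) := by nlinarith
  have key : ∀ m n, T m n ≤ C * (1.1 : ℝ) ^ (m + 2 * n) := by
    intro m
    induction m using Nat.strong_induction_on with
    | _ m ih =>
      intro n
      by_cases hmn : m < 5 ∨ n < 4
      · exact le_trans (hbase m n hmn) (hbase' m n)
      · push_neg at hmn
        obtain ⟨h5, h4⟩ := hmn
        have hrec' := hrec m n h5 h4
        have ih1 := ih (m - 3) (by omega) (n - 1)
        have ih2 := ih (m - 5) (by omega) (n - 4)
        set X : ℝ := (1.1 : ℝ) ^ (m + 2 * n) with hX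
        have hXpos : 0 < X := by positivity
        have e1 : (1.1 : ℝ) ^ ((m - 3) + 2 * (n - 1)) * (1.1 : ℝ) ^ 5 = X := by
          rw [← pow_add, hX]; congr 1; omega
        have e2 : (1.1 : ℝ) ^ ((m - 5) + 2 * (n - 4)) * (1.1 : ℝ) ^ 13 = X := by
          rw [← pow_add, hX]; congr 1; omega
        have ha : (1.1 : ℝ) ^ ((m - 3) + 2 * (n - 1)) = X / (1.1 : ℝ) ^ 5 := by
          rw [eq_div_iff (by norm_num)]; exact e1
        have hb : (1.1 : ℝ) ^ ((m - 5) + 2 * (n - 4)) = X / (1.1 : ℝ) ^ 13 := by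
          rw [eq_div_iff (by norm_num)]; exact e2
        -- polynomial term
        have hpoly : ((m : ℝ) + n) ^ k ≤ ε * C * X := by
          have h0 : ((m : ℝ) + n) ^ k ≤ ((m : ℝ) + n + 2) ^ k := by
            apply pow_le_pow_left₀ (by positivity)
            linarith
          have h1 : ((m : ℝ) + n + 2) ^ k ≤ C * X := hbase' m n
          -- refine: need ε * C * X, use D * 1.1^(m+n) ≤ ε * C * X
          have h2 := hD (m + n)
          have h2' : ((m : ℝ) + n + 2) ^ k ≤ D * (1.1 : ℝ) ^ (m + n) := by
            have : (((m + n : ℕ) : ℝ) + 2) = (m : ℝ) + n + 2 := by push_cast; ring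
            rwa [this] at h2
          have h3 : (1.1 : ℝ) ^ (m + n) ≤ X := by
            rw [hX]; exact pow_le_pow_right₀ (by norm_num) (by omega)
          have hD0 : 0 < D := lt_of_lt_of_le one_pos hD1
          calc ((m : ℝ) + n) ^ k ≤ ((m : ℝ) + n + 2) ^ k := h0
            _ ≤ D * (1.1 : ℝ) ^ (m + n) := h2'
            _ ≤ D * X := by nlinarith
            _ = ε * C * X := by rw [hDC]
        rw [ha] at ih1
        rw [hb] at ih2
        calc T m n ≤ T (m - 3) (n - 1) + T (m - 5) (n - 4) + ((m : ℝ) + n) ^ k := hrec'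
          _ ≤ C * (X / (1.1 : ℝ) ^ 5) + C * (X / (1.1 : ℝ) ^ 13) + ε * C * X := by
              gcongr
          _ = C * X := by rw [hε_def]; ring
  refine ⟨C, hC, fun m n => ?_⟩
  have hconv : (1.21 : ℝ) ^ ((m : ℝ) / 2 + (n : ℝ)) = (1.1 : ℝ) ^ (m + 2 * n) := by
    have h2 : (1.21 : ℝ) = (1.1 : ℝ) ^ (2 : ℝ) := by
      rw [show (2 : ℝ) = ((2 : ℕ) : ℝ) by norm_num, Real.rpow_natCast]
      norm_num
    rw [h2, ← Real.rpow_natCast (1.1 : ℝ) (m + 2 * n), ← Real.rpow_mul (by norm_num)]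
    congr 1
    push_cast
    ring
  rw [hconv]
  exact key m n
end

section
/- Let F be a 3-CNF formula with m clauses over a variable type V, and let F′ be its GJS transformation, a 2-CNF formula over V together with fresh variables y₁,…,y_m. Then: (i) for every assignment σ : V → Bool and every y : Fin m → Bool, sat(F′, (σ,y)) ≤ 6m + sat(F, σ); and (ii) maxsat(F′) = 6m + maxsat(F). -/
/-- A literal: a variable together with a polarity. -/
def Lit (V : Type*) := V × Bool

/-- A literal evaluates to `σ v` if positive and `¬ σ v` if negative. -/
def litEval {V : Type*} (σ : V → Bool) (l : Lit V) : Bool :=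
  if l.2 then σ l.1 else !(σ l.1)

/-- A 3-clause: a triple of literals. -/
def Clause3 (V : Type*) := Lit V × Lit V × Lit V

/-- A 3-clause is satisfied if at least one of its literals evaluates to true. -/
def c3Eval {V : Type*} (σ : V → Bool) (c : Clause3 V) : Bool :=
  litEval σ c.1 || litEval σ c.2.1 || litEval σ c.2.2

/-- A 2-clause: a pair of literals (a unit clause is represented by a repeated literal). -/
def Clause2 (V : Type*) := Lit V × Lit V

def c2Eval {V : Type*} (σ : V → Bool) (c : Clause2 V) : Bool :=
  litEval σ c.1 || litEval σ c.2

/-- Number of clauses of the 3-CNF formula `F` satisfied by `σ`. -/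
def sat3 {V : Type*} (F : List (Clause3 V)) (σ : V → Bool) : ℕ :=
  (F.filter (fun c => c3Eval σ c)).length

/-- Number of clauses of the 2-CNF formula `F` satisfied by `σ`. -/
def sat2 {V : Type*} (F : List (Clause2 V)) (σ : V → Bool) : ℕ :=
  (F.filter (fun c => c2Eval σ c)).length

/-- The maximum number of simultaneously satisfiable clauses of a 3-CNF formula. -/
def maxsat3 {V : Type*} [Fintype V] [DecidableEq V] (F : List (Clause3 V)) : ℕ :=
  Finset.univ.sup (fun σ : V → Bool => sat3 F σ)

/-- The maximum number of simultaneously satisfiable clauses of a 2-CNF formula. -/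
def maxsat2 {V : Type*} [Fintype V] [DecidableEq V] (F : List (Clause2 V)) : ℕ :=
  Finset.univ.sup (fun σ : V → Bool => sat2 F σ)

def negLit {V : Type*} (l : Lit V) : Lit V := (l.1, !l.2)

/-- The ten GJS gadget 2-clauses for the `i`-th 3-clause `c = (ℓ₁ ∨ ℓ₂ ∨ ℓ₃)`:
`(ℓ₁), (ℓ₂), (ℓ₃), (yᵢ), (¬ℓ₁∨¬ℓ₂), (¬ℓ₂∨¬ℓ₃), (¬ℓ₁∨¬ℓ₃), (ℓ₁∨¬yᵢ), (ℓ₂∨¬yᵢ), (ℓ₃∨¬yᵢ)`. -/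
def gjsGadget {V : Type*} {m : ℕ} (i : Fin m) (c : Clause3 V) :
    List (Clause2 (V ⊕ Fin m)) :=
  let l₁ : Lit (V ⊕ Fin m) := (Sum.inl c.1.1, c.1.2)
  let l₂ : Lit (V ⊕ Fin m) := (Sum.inl c.2.1.1, c.2.1.2)
  let l₃ : Lit (V ⊕ Fin m) := (Sum.inl c.2.2.1, c.2.2.2)
  let y : Lit (V ⊕ Fin m) := (Sum.inr i, true)
  [(l₁, l₁), (l₂, l₂), (l₃, l₃), (y, y),
   (negLit l₁, negLit l₂), (negLit l₂, negLit l₃), (negLit l₁, negLit l₃),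
   (l₁, negLit y), (l₂, negLit y), (l₃, negLit y)]

/-- The GJS transformation of a 3-CNF formula: replace each clause by its ten gadget
2-clauses, over the original variables plus one fresh variable per clause. -/
def gjs {V : Type*} (F : List (Clause3 V)) : List (Clause2 (V ⊕ Fin F.length)) :=
  (List.ofFn (fun i : Fin F.length => gjsGadget i (F.get i))).flatten

/-!
If `k` of the literals `ℓ₁, ℓ₂, ℓ₃` are true, the `i`-th gadget satisfies `k` unit clauses and
`3, 3, 2, 0` of the clauses `¬ℓⱼ ∨ ¬ℓₖ` for `k = 0, 1, 2, 3`; `yᵢ = false` satisfies the three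
clauses `ℓⱼ ∨ ¬yᵢ`, while `yᵢ = true` satisfies `(yᵢ)` and `k` of them. Hence the gadget has at
most 7 satisfied clauses if `cᵢ` is satisfied and at most 6 otherwise, with equality for
`yᵢ = ℓ₁ ∧ ℓ₂ ∧ ℓ₃`. Summing over the gadgets gives the bound, attained for that choice of `y`,
and maximizing over `σ` gives the identity for `maxsat`.
-/

section Literals

variable {V W : Type*}

theorem negLit_mk (v : V) (p : Bool) : negLit (v, p) = (v, !p) := rfl

theorem litEval_not (σ : V → Bool) (v : V) (p : Bool) :
    litEval σ (v, !p) = !litEval σ (v, p) := by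
  cases p <;> simp [litEval]

theorem litEval_sumElim_inl (σ : V → Bool) (τ : W → Bool) (v : V) (p : Bool) :
    litEval (Sum.elim σ τ) (Sum.inl v, p) = litEval σ (v, p) := rfl

theorem litEval_sumElim_inr (σ : V → Bool) (τ : W → Bool) (w : W) :
    litEval (Sum.elim σ τ) (Sum.inr w, true) = τ w := rfl

end Literals

theorem List.length_filter_eq_sum_toNat {α : Type*} (L : List α) (p : α → Bool) :
    (L.filter p).length = ∑ i : Fin L.length, (p (L.get i)).toNat := by
  induction L with
  | nil => rfl
  | cons a l ih =>
    simp only [List.length_cons, Fin.sum_univ_succ, List.filter_cons]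
    cases h : p a <;> simp_all [Nat.add_comm]

section Counting

variable {V : Type*}

theorem sat3_eq_sum (F : List (Clause3 V)) (σ : V → Bool) :
    sat3 F σ = ∑ i : Fin F.length, (c3Eval σ (F.get i)).toNat :=
  F.length_filter_eq_sum_toNat _

theorem sat2_nil (σ : V → Bool) : sat2 ([] : List (Clause2 V)) σ = 0 := rfl

theorem sat2_cons (c : Clause2 V) (F : List (Clause2 V)) (σ : V → Bool) :
    sat2 (c :: F) σ = (c2Eval σ c).toNat + sat2 F σ := by
  rw [sat2, sat2, List.filter_cons]
  cases c2Eval σ c <;> simp [Nat.add_comm]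

/-- `sat2_cons` for a clause written as a pair of pairs: since `Lit` and `Clause2` are not
reducible, `simp` cannot match the clauses of `gjsGadget` against `sat2_cons` itself. -/
theorem sat2_cons_mk (v v' : V) (p p' : Bool) (F : List (Clause2 V)) (σ : V → Bool) :
    sat2 (((v, p), (v', p')) :: F) σ =
      (litEval σ (v, p) || litEval σ (v', p')).toNat + sat2 F σ :=
  sat2_cons _ F σ

theorem sat2_flatten (L : List (List (Clause2 V))) (σ : V → Bool) :
    sat2 L.flatten σ = (L.map (sat2 · σ)).sum := by
  simp [sat2, Function.comp_def]

end Counting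

section Gadget

def gadgetScore (a b c t : Bool) : ℕ :=
  ([a, b, c, t, !a || !b, !b || !c, !a || !c, a || !t, b || !t, c || !t].map Bool.toNat).sum

theorem gadgetScore_le (a b c t : Bool) : gadgetScore a b c t ≤ 6 + (a || b || c).toNat := by
  revert a b c t
  decide

theorem gadgetScore_and (a b c : Bool) :
    gadgetScore a b c (a && b && c) = 6 + (a || b || c).toNat := by
  revert a b c
  decide

variable {V : Type*} {m : ℕ} (σ : V → Bool) (y : Fin m → Bool) (i : Fin m) (c : Clause3 V)

theorem sat2_gjsGadget :
    sat2 (gjsGadget i c) (Sum.elim σ y) =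
      gadgetScore (litEval σ c.1) (litEval σ c.2.1) (litEval σ c.2.2) (y i) := by
  obtain ⟨⟨v₁, p₁⟩, ⟨v₂, p₂⟩, ⟨v₃, p₃⟩⟩ := c
  simp only [gjsGadget, negLit_mk, sat2_cons_mk, sat2_nil, litEval_not, litEval_sumElim_inl,
    litEval_sumElim_inr, Bool.or_self]
  rfl

theorem sat2_gjsGadget_le : sat2 (gjsGadget i c) (Sum.elim σ y) ≤ 6 + (c3Eval σ c).toNat :=
  (sat2_gjsGadget σ y i c).trans_le (gadgetScore_le _ _ _ _)

theorem sat2_gjsGadget_of_eq_and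
    (hy : y i = (litEval σ c.1 && litEval σ c.2.1 && litEval σ c.2.2)) :
    sat2 (gjsGadget i c) (Sum.elim σ y) = 6 + (c3Eval σ c).toNat := by
  rw [sat2_gjsGadget, hy, gadgetScore_and]
  rfl

end Gadget

section Transformation

variable {V : Type*} (F : List (Clause3 V)) (σ : V → Bool)

theorem sat2_gjs (y : Fin F.length → Bool) :
    sat2 (gjs F) (Sum.elim σ y) =
      ∑ i : Fin F.length, sat2 (gjsGadget i (F.get i)) (Sum.elim σ y) := by
  rw [gjs, sat2_flatten, List.map_ofFn, List.sum_ofFn]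
  rfl

theorem sum_six_add_c3Eval_eq :
    ∑ i : Fin F.length, (6 + (c3Eval σ (F.get i)).toNat) = 6 * F.length + sat3 F σ := by
  rw [Finset.sum_add_distrib, sat3_eq_sum, Finset.sum_const, Finset.card_univ, Fintype.card_fin,
    smul_eq_mul, Nat.mul_comm]

theorem sat2_gjs_le (y : Fin F.length → Bool) :
    sat2 (gjs F) (Sum.elim σ y) ≤ 6 * F.length + sat3 F σ := by
  rw [sat2_gjs, ← sum_six_add_c3Eval_eq]
  exact Finset.sum_le_sum fun i _ => sat2_gjsGadget_le σ y i (F.get i)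

def gjsAuxOpt : Fin F.length → Bool := fun i =>
  litEval σ (F.get i).1 && litEval σ (F.get i).2.1 && litEval σ (F.get i).2.2

theorem sat2_gjs_gjsAuxOpt :
    sat2 (gjs F) (Sum.elim σ (gjsAuxOpt F σ)) = 6 * F.length + sat3 F σ := by
  rw [sat2_gjs, ← sum_six_add_c3Eval_eq]
  exact Finset.sum_congr rfl fun i _ => sat2_gjsGadget_of_eq_and σ _ i (F.get i) rfl

end Transformation

theorem gjs_sat_bounds {V : Type*} [Fintype V] [DecidableEq V]
    (F : List (Clause3 V)) :
    (∀ (σ : V → Bool) (y : Fin F.length → Bool),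
        sat2 (gjs F) (Sum.elim σ y) ≤ 6 * F.length + sat3 F σ) ∧
    maxsat2 (gjs F) = 6 * F.length + maxsat3 F := by
  refine ⟨sat2_gjs_le F, le_antisymm ?_ ?_⟩
  · refine Finset.sup_le fun τ _ => ?_
    rw [← Sum.elim_comp_inl_inr τ]
    exact (sat2_gjs_le F _ _).trans
      (Nat.add_le_add_left (Finset.le_sup (f := sat3 F) (Finset.mem_univ _)) _)
  · obtain ⟨σ, -, hσ⟩ := Finset.exists_mem_eq_sup Finset.univ Finset.univ_nonempty (sat3 F)
    rw [maxsat3, hσ, ← sat2_gjs_gjsAuxOpt]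
    exact Finset.le_sup (f := sat2 (gjs F)) (Finset.mem_univ _)
end
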